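/- Every finite simple graph G with at least one edge satisfies η(G) ≤ 2ν(G) − 2. -/

import Mathlib

open SimpleGraph

variable {V : Type*}

/-- `M` is a matching in `G`: a set of pairwise vertex-disjoint edges of `G`. -/
def IsMatchingIn (G : SimpleGraph V) (M : Finset (Sym2 V)) : Prop :=
  (∀ e ∈ M, e ∈ G.edgeSet) ∧
    ∀ e ∈ M, ∀ f ∈ M, e ≠ f → ∀ v : V, v ∈ e → v ∉ f

/-- `M` is a maximal matching in `G`: a matching not properly contained in another matching. -/
def IsMaximalMatchingIn (G : SimpleGraph V) (M : Finset (Sym2 V)) : Prop :=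
  IsMatchingIn G M ∧ ∀ M', IsMatchingIn G M' → M ⊆ M' → M' = M

/-- `M` saturates (covers) the vertex `v`. -/
def Sat (M : Finset (Sym2 V)) (v : V) : Prop := ∃ e ∈ M, v ∈ e

/-- The matching number `ν(G)`. -/
noncomputable def nuNum (G : SimpleGraph V) : ℕ :=
  sSup {n | ∃ M, IsMatchingIn G M ∧ M.card = n}

/-- The minimum maximal matching number `β(G)`. -/
noncomputable def betaNum (G : SimpleGraph V) : ℕ :=
  sInf {n | ∃ M, IsMaximalMatchingIn G M ∧ M.card = n}

/-- The matching gap `μ(G) = ν(G) - β(G)`. -/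
noncomputable def muGap (G : SimpleGraph V) : ℕ := nuNum G - betaNum G

/-- `M` covers the vertex set `S`. -/
def CoversSet (M : Finset (Sym2 V)) (S : Set V) : Prop := ∀ v ∈ S, Sat M v

/-- `S` is an equimatchable set in `G`: all maximal matchings of `G` covering `S`
have the same size. -/
def EquiSet (G : SimpleGraph V) (S : Set V) : Prop :=
  ∀ M M' : Finset (Sym2 V), IsMaximalMatchingIn G M → IsMaximalMatchingIn G M' →
    CoversSet M S → CoversSet M' S → M.card = M'.card

/-- The equimatchability defect `η(G)`: the minimum size of an equimatchable set in `G`. -/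
noncomputable def etaDefect (G : SimpleGraph V) : ℕ :=
  sInf {n | ∃ S : Set V, EquiSet G S ∧ S.ncard = n}

/-
A maximum matching `M` minus one of its edges `ab` leaves a matching `F` with `2ν - 2`
vertices. A maximal matching `M'` covering `V(F)` with at most `ν - 1` edges has exactly `V(F)`
as vertex set, so `ab` could be added to it; hence every maximal matching covering `V(F)` is
maximum.
-/

open Finset

theorem isMatchingIn_empty {G : SimpleGraph V} : IsMatchingIn G ∅ := by
  constructor <;> simp

namespace IsMatchingIn

variable {G : SimpleGraph V} {M N : Finset (Sym2 V)} {e : Sym2 V}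

theorem mono (hM : IsMatchingIn G M) (hN : N ⊆ M) : IsMatchingIn G N :=
  ⟨fun e he => hM.1 e (hN he), fun e he f hf => hM.2 e (hN he) f (hN hf)⟩

variable [DecidableEq V]

theorem not_sat_erase (hM : IsMatchingIn G M) (he : e ∈ M) {v : V} (hv : v ∈ e) :
    ¬ Sat (M.erase e) v := by
  rintro ⟨f, hf, hvf⟩
  exact hM.2 f (mem_of_mem_erase hf) e he (ne_of_mem_erase hf) v hvf hv

theorem insert (hM : IsMatchingIn G M) (he : e ∈ G.edgeSet) (hfree : ∀ v ∈ e, ¬ Sat M v) :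
    IsMatchingIn G (insert e M) := by
  refine ⟨fun f hf => ?_, fun f hf f' hf' hne v hv hv' => ?_⟩
  · rcases mem_insert.mp hf with rfl | hf
    exacts [he, hM.1 f hf]
  · rcases mem_insert.mp hf with rfl | hfM <;> rcases mem_insert.mp hf' with rfl | hfM'
    · exact hne rfl
    · exact hfree v hv ⟨f', hfM', hv'⟩
    · exact hfree v hv' ⟨f, hfM, hv⟩
    · exact hM.2 f hfM f' hfM' hne v hv hv'

end IsMatchingIn

section Vertices

variable [DecidableEq V]

def matchedVerts (M : Finset (Sym2 V)) : Finset V := M.biUnion Sym2.toFinset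

theorem mem_matchedVerts {M : Finset (Sym2 V)} {v : V} : v ∈ matchedVerts M ↔ Sat M v := by
  simp [matchedVerts, Sat, Sym2.mem_toFinset]

theorem coversSet_matchedVerts_iff {M N : Finset (Sym2 V)} :
    CoversSet M (matchedVerts N : Set V) ↔ matchedVerts N ⊆ matchedVerts M := by
  simp only [CoversSet, Finset.mem_coe, Finset.subset_iff, mem_matchedVerts]

theorem IsMatchingIn.card_matchedVerts {G : SimpleGraph V} {M : Finset (Sym2 V)}
    (hM : IsMatchingIn G M) : #(matchedVerts M) = 2 * #M := by
  rw [matchedVerts, card_biUnion, sum_const_nat, mul_comm]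
  · exact fun e he =>
      Sym2.card_toFinset_of_not_isDiag e (G.not_isDiag_of_mem_edgeSet (hM.1 e he))
  · intro e he f hf hne
    exact disjoint_left.mpr fun v hve hvf =>
      hM.2 e he f hf hne v (Sym2.mem_toFinset.mp hve) (Sym2.mem_toFinset.mp hvf)

end Vertices

section MatchingNumber

variable [Fintype V] {G : SimpleGraph V}

theorem bddAbove_matchingSizes (G : SimpleGraph V) :
    BddAbove {n | ∃ M, IsMatchingIn G M ∧ #M = n} := by
  classical
  exact ⟨Fintype.card (Sym2 V), by rintro _ ⟨M, -, rfl⟩; exact card_le_univ M⟩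

theorem IsMatchingIn.card_le_nuNum {M : Finset (Sym2 V)} (hM : IsMatchingIn G M) :
    #M ≤ nuNum G :=
  le_csSup (bddAbove_matchingSizes G) ⟨M, hM, rfl⟩

theorem exists_isMatchingIn_card_eq_nuNum (G : SimpleGraph V) :
    ∃ M, IsMatchingIn G M ∧ #M = nuNum G :=
  Nat.sSup_mem (s := {n | ∃ M, IsMatchingIn G M ∧ #M = n}) ⟨0, ∅, isMatchingIn_empty, rfl⟩
    (bddAbove_matchingSizes G)

theorem one_le_nuNum {u v : V} (huv : G.Adj u v) : 1 ≤ nuNum G := by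
  have hM : IsMatchingIn G {s(u, v)} := by constructor <;> simp [huv]
  simpa using hM.card_le_nuNum

end MatchingNumber

theorem IsMaximalMatchingIn.card_gt_of_coversSet [DecidableEq V] {G : SimpleGraph V}
    {F M : Finset (Sym2 V)} {e : Sym2 V} (hM : IsMaximalMatchingIn G M) (hF : IsMatchingIn G F)
    (he : e ∈ G.edgeSet) (hfree : ∀ v ∈ e, ¬ Sat F v)
    (hcov : CoversSet M (matchedVerts F : Set V)) :
    #F < #M := by
  by_contra! hle
  have hverts : matchedVerts F = matchedVerts M := by
    refine eq_of_subset_of_card_le (coversSet_matchedVerts_iff.mp hcov) ?_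
    rw [hM.1.card_matchedVerts, hF.card_matchedVerts]
    omega
  have hfreeM : ∀ v ∈ e, ¬ Sat M v := fun v hv hsat =>
    hfree v hv (mem_matchedVerts.mp (hverts ▸ mem_matchedVerts.mpr hsat))
  have heM : e ∉ M := fun heM => hfreeM _ (Sym2.out_fst_mem e) ⟨e, heM, Sym2.out_fst_mem e⟩
  exact heM (hM.2 _ (hM.1.insert he hfreeM) (subset_insert e M) ▸ mem_insert_self e M)

theorem equiSet_matchedVerts_erase [Fintype V] [DecidableEq V] {G : SimpleGraph V}
    {M : Finset (Sym2 V)} {e : Sym2 V} (hM : IsMatchingIn G M) (hmax : #M = nuNum G)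
    (he : e ∈ M) : EquiSet G (matchedVerts (M.erase e) : Set V) := by
  have hall : ∀ M', IsMaximalMatchingIn G M' →
      CoversSet M' (matchedVerts (M.erase e) : Set V) → #M' = nuNum G := by
    intro M' hM' hcov
    have hgt := hM'.card_gt_of_coversSet (hM.mono (erase_subset e M)) (hM.1 e he)
      (fun v hv => hM.not_sat_erase he hv) hcov
    have hle := hM'.1.card_le_nuNum
    rw [card_erase_of_mem he] at hgt
    omega
  intro M₁ M₂ h₁ h₂ c₁ c₂
  rw [hall M₁ h₁ c₁, hall M₂ h₂ c₂]

theorem stmt_17 {V : Type*} [Fintype V] (G : SimpleGraph V)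
    (hEdge : ∃ u v : V, G.Adj u v) :
    etaDefect G ≤ 2 * nuNum G - 2 := by
  classical
  obtain ⟨u, v, huv⟩ := hEdge
  obtain ⟨M, hM, hmax⟩ := exists_isMatchingIn_card_eq_nuNum G
  obtain ⟨e, he⟩ : M.Nonempty := card_pos.mp (hmax ▸ one_le_nuNum huv)
  have hcard : (matchedVerts (M.erase e) : Set V).ncard = 2 * nuNum G - 2 := by
    rw [Set.ncard_coe_finset, (hM.mono (erase_subset e M)).card_matchedVerts,
      card_erase_of_mem he, hmax]
    omega
  exact Nat.sInf_le ⟨_, equiSet_matchedVerts_erase hM hmax he, hcard⟩
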